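/- Let K be a convex body in R^d in gamma-canonical form for gamma in (0,1], let x ∈ K with x ≠ 0, and let y = t·x for some t >= 1 with y ∈ K (so y lies on the ray from the origin through x with ray(y) <= ray(x)). If delta(y) >= delta(x)/alpha for some alpha >= 1, then v(y) >= (gamma/alpha)^d · v(x), where v(z) denotes the infimum of the Lebesgue measures of caps of K containing z. -/

import Mathlib

/-!
Let `x' = m • x` be the point where the ray through `x` leaves `K`. Since `K` contains the ball
of radius `γ/2` about `0`, the point `x = m⁻¹ • x'` has depth `δ(x) ≥ (1 - 1/m) γ/2`, while
`δ(y) ≤ |y - x'| ≤ (m - t)/(2m)`; the hypothesis on depths turns this into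
`(γ/α) (m - 1) ≤ m - t`. That inequality says exactly that `y` is the image of `x` under a
homothety of ratio `γ/α` centred at a point of the segment `[0, x']`. Such a homothety maps `K`
into itself and the cap of `K` cut off at `x` in any direction `u` into the cap cut off at `y`
in direction `u`, scaling volumes by `(γ/α)^d`.
-/

open Set MeasureTheory Metric
open scoped ENNReal

/-- A cap of `K`: a nonempty intersection of `K` with a halfspace. -/
def IsCap {d : ℕ} (K C : Set (EuclideanSpace ℝ (Fin d))) : Prop :=
  C.Nonempty ∧ ∃ u : EuclideanSpace ℝ (Fin d), ‖u‖ = 1 ∧ ∃ c : ℝ,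
    C = {x ∈ K | c ≤ (inner ℝ u x : ℝ)}

/-- `v(z)`: the infimum of the volumes of caps of `K` containing `z`. -/
noncomputable def minCapVol {d : ℕ} (K : Set (EuclideanSpace ℝ (Fin d)))
    (z : EuclideanSpace ℝ (Fin d)) : ℝ≥0∞ :=
  sInf {v | ∃ C : Set (EuclideanSpace ℝ (Fin d)), IsCap K C ∧ z ∈ C ∧ v = volume C}

open AffineMap

lemma le_infDist_frontier_of_ball_subset {X : Type*} [PseudoMetricSpace X] {K : Set X} {x : X}
    {ρ : ℝ} (hK : (frontier K).Nonempty) (h : ball x ρ ⊆ K) : ρ ≤ infDist x (frontier K) :=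
  (le_infDist hK).2 fun _ hf => not_lt.1 fun hlt =>
    hf.2 (interior_maximal h isOpen_ball (mem_ball'.2 hlt))

section NormedSpace

variable {E : Type*} [NormedAddCommGroup E] [NormedSpace ℝ E] {K : Set E}

lemma Convex.ball_smul_subset_of_ball_subset (hK : Convex ℝ K) {r : ℝ} (hr : ball 0 r ⊆ K)
    {z : E} (hz : z ∈ K) {c : ℝ} (hc0 : 0 ≤ c) (hc1 : c ≤ 1) :
    ball (c • z) ((1 - c) * r) ⊆ K := by
  rcases hc1.lt_or_eq with hc1 | rfl
  · intro w hw
    have hc : 0 < 1 - c := sub_pos.2 hc1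
    have hv : (1 - c)⁻¹ • (w - c • z) ∈ K := hr <| by
      rwa [mem_ball_zero_iff, norm_smul, norm_inv, Real.norm_of_nonneg hc.le,
        inv_mul_lt_iff₀ hc, ← dist_eq_norm]
    convert hK hv hz hc.le hc0 (by ring) using 1
    rw [smul_smul, mul_inv_cancel₀ hc.ne', one_smul, sub_add_cancel]
  · simp

lemma IsCompact.exists_smul_mem_frontier_forall_le (hK : IsCompact K) {x : E} (hx0 : x ≠ 0)
    (hx : x ∈ K) : ∃ m : ℝ, m • x ∈ frontier K ∧ ∀ t : ℝ, t • x ∈ K → t ≤ m := by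
  set T := (fun c : ℝ => c • x) ⁻¹' K
  have hT : IsCompact T := (isClosedEmbedding_smul_left hx0).isCompact_preimage hK
  have hTne : T.Nonempty := ⟨1, by simpa [T] using hx⟩
  refine ⟨sSup T, (continuous_id.smul continuous_const).frontier_preimage_subset K ?_,
    fun t ht => le_csSup hT.bddAbove ht⟩
  have hTc : Ioi (sSup T) ⊆ Tᶜ := fun t ht hT' => (le_csSup hT.bddAbove hT').not_gt ht
  rw [frontier_eq_closure_inter_closure]
  exact ⟨subset_closure (hT.sSup_mem hTne),
    closure_mono hTc (by rw [closure_Ioi]; exact self_mem_Ici)⟩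

end NormedSpace

lemma Convex.exists_homothety_eq_smul {E : Type*} [AddCommGroup E] [Module ℝ E] {K : Set E}
    (hK : Convex ℝ K) (h0 : 0 ∈ K) {x : E} {m s t : ℝ} (hmx : m • x ∈ K) (hs1 : s ≤ 1)
    (ht : 1 ≤ t) (hst : s * (m - 1) ≤ m - t) : ∃ k ∈ K, homothety k s x = t • x := by
  rcases hs1.lt_or_eq with hs1 | rfl
  · have hs : 0 < 1 - s := sub_pos.2 hs1
    have hm : 0 < m := by nlinarith
    refine ⟨((t - s) / (1 - s)) • x, ?_, ?_⟩
    · have hk : ((t - s) / (1 - s)) • x = ((t - s) / ((1 - s) * m)) • m • x := by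
        rw [smul_smul]; congr 1; field_simp
      rw [hk]
      refine (hK.starConvex h0).smul_mem hmx (div_nonneg (by linarith) (by positivity)) ?_
      rw [div_le_one (by positivity)]
      linarith
    · simp only [homothety_apply, vsub_eq_sub, vadd_eq_add, smul_sub, smul_smul, ← sub_smul,
        ← add_smul]
      congr 1
      field_simp
      ring
  · exact ⟨0, h0, by rw [homothety_one, show t = 1 by linarith, one_smul]; rfl⟩

lemma Convex.image_homothety_cap_subset {E : Type*} [NormedAddCommGroup E]
    [InnerProductSpace ℝ E] {K : Set E} (hK : Convex ℝ K) {k : E} (hk : k ∈ K) {s : ℝ}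
    (hs0 : 0 ≤ s) (hs1 : s ≤ 1) (u x : E) :
    homothety k s '' {z ∈ K | inner ℝ u x ≤ inner ℝ u z} ⊆
      {z ∈ K | inner ℝ u (homothety k s x) ≤ inner ℝ u z} := by
  rintro _ ⟨z, ⟨hzK, hxz⟩, rfl⟩
  refine ⟨?_, ?_⟩
  · rw [homothety_eq_lineMap]
    exact hK.lineMap_mem hk hzK ⟨hs0, hs1⟩
  · simp only [homothety_apply, vsub_eq_sub, vadd_eq_add, inner_add_right, inner_smul_right,
      inner_sub_right]
    nlinarith

lemma ofReal_pow_mul_minCapVol_le_homothety {d : ℕ} {K : Set (EuclideanSpace ℝ (Fin d))}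
    (hK : Convex ℝ K) {k x : EuclideanSpace ℝ (Fin d)} (hk : k ∈ K) (hx : x ∈ K) {s : ℝ}
    (hs0 : 0 ≤ s) (hs1 : s ≤ 1) :
    ENNReal.ofReal (s ^ d) * minCapVol K x ≤ minCapVol K (homothety k s x) := by
  refine le_sInf ?_
  rintro _ ⟨C, ⟨-, u, hu, c, rfl⟩, ⟨-, hc⟩, rfl⟩
  set Cx := {z ∈ K | inner ℝ u x ≤ inner ℝ u z}
  have hCx : minCapVol K x ≤ volume Cx :=
    sInf_le ⟨Cx, ⟨⟨x, hx, le_rfl⟩, u, hu, _, rfl⟩, ⟨hx, le_rfl⟩, rfl⟩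
  calc ENNReal.ofReal (s ^ d) * minCapVol K x ≤ ENNReal.ofReal (s ^ d) * volume Cx := by gcongr
    _ = volume (homothety k s '' Cx) := by
      rw [Measure.addHaar_image_homothety, finrank_euclideanSpace_fin,
        abs_of_nonneg (by positivity)]
    _ ≤ volume {z ∈ K | c ≤ inner ℝ u z} := measure_mono
      ((hK.image_homothety_cap_subset hk hs0 hs1 u x).trans fun _ hz => ⟨hz.1, hc.trans hz.2⟩)

theorem minCapVol_ray_le_general (d : ℕ) (gamma : ℝ) (hγ0 : 0 < gamma) (hγ1 : gamma ≤ 1)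
    (K : Set (EuclideanSpace ℝ (Fin d)))
    (hK_compact : IsCompact K) (hK_conv : Convex ℝ K)
    (hK_ball : closedBall 0 (gamma / 2) ⊆ K) (hK_ball' : K ⊆ closedBall 0 (1 / 2))
    (x y : EuclideanSpace ℝ (Fin d)) (hx : x ∈ K) (hx0 : x ≠ 0) (hy : y ∈ K)
    (t : ℝ) (ht : 1 ≤ t) (hyt : y = t • x)
    (alpha : ℝ) (halpha : 1 ≤ alpha)
    (hδ : infDist x (frontier K) / alpha ≤ infDist y (frontier K)) :
    ENNReal.ofReal ((gamma / alpha) ^ d) * minCapVol K x ≤ minCapVol K y := by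
  have hα : 0 < alpha := by linarith
  have hs1 : gamma / alpha ≤ 1 := div_le_one_of_le₀ (by linarith) hα.le
  obtain ⟨m, hm, hm_max⟩ := hK_compact.exists_smul_mem_frontier_forall_le hx0 hx
  have hmK : m • x ∈ K := hK_compact.isClosed.frontier_subset hm
  have hm1 : 1 ≤ m := hm_max 1 (by rwa [one_smul])
  have htm : t ≤ m := hm_max t (hyt ▸ hy)
  have hm0 : 0 < m := by linarith
  have hmx : m * ‖x‖ ≤ 1 / 2 := by
    simpa [norm_smul, abs_of_pos hm0] using hK_ball' hmK
  have hδx : (1 - m⁻¹) * (gamma / 2) ≤ infDist x (frontier K) := by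
    simpa [smul_smul, inv_mul_cancel₀ hm0.ne'] using le_infDist_frontier_of_ball_subset ⟨_, hm⟩
      (hK_conv.ball_smul_subset_of_ball_subset (ball_subset_closedBall.trans hK_ball) hmK
        (inv_nonneg.2 hm0.le) (inv_le_one_of_one_le₀ hm1))
  have hδy : infDist y (frontier K) ≤ (m - t) * ‖x‖ := by
    calc infDist y (frontier K) ≤ dist y (m • x) := infDist_le_dist_of_mem hm
      _ = (m - t) * ‖x‖ := by
        rw [hyt, dist_eq_norm, ← sub_smul, norm_smul, Real.norm_of_nonpos (by linarith)]
        ring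
  have hst : gamma / alpha * (m - 1) ≤ m - t := by
    rw [div_mul_eq_mul_div, div_le_iff₀ hα]
    calc gamma * (m - 1) = 2 * m * ((1 - m⁻¹) * (gamma / 2)) := by field_simp
      _ ≤ 2 * m * (alpha * infDist y (frontier K)) := by
        gcongr 2 * m * ?_
        exact hδx.trans ((div_le_iff₀' hα).1 hδ)
      _ ≤ 2 * m * (alpha * ((m - t) * ‖x‖)) := by gcongr
      _ = alpha * (m - t) * (2 * (m * ‖x‖)) := by ring
      _ ≤ alpha * (m - t) := mul_le_of_le_one_right (mul_nonneg hα.le (by linarith)) (by linarith)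
      _ = (m - t) * alpha := mul_comm _ _
  obtain ⟨k, hk, hky⟩ := hK_conv.exists_homothety_eq_smul
    (hK_ball (mem_closedBall_self (by positivity))) hmK hs1 ht hst
  rw [hyt, ← hky]
  exact ofReal_pow_mul_minCapVol_le_homothety hK_conv hk hx (by positivity) hs1

/-- Lemma `vol-delta`: let `K` be a convex body in `γ`-canonical form
and `y = t·x` (with `t ≥ 1`, `y ∈ K`) a point further out along the ray `Ox` than `x`.
If `δ(y) ≥ δ(x)/α` for some `α ≥ 1`, then `v(y) ≥ (γ/α)^d · v(x)`. -/
theorem minCapVol_ray_le (d : ℕ) (gamma : ℝ) (hγ0 : 0 < gamma) (hγ1 : gamma ≤ 1)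
    (K : Set (EuclideanSpace ℝ (Fin d)))
    (hK_compact : IsCompact K) (hK_conv : Convex ℝ K)
    (hK_int : (interior K).Nonempty)
    (hK_ball : closedBall 0 (gamma / 2) ⊆ K) (hK_ball' : K ⊆ closedBall 0 (1 / 2))
    (x y : EuclideanSpace ℝ (Fin d)) (hx : x ∈ K) (hx0 : x ≠ 0) (hy : y ∈ K)
    (t : ℝ) (ht : 1 ≤ t) (hyt : y = t • x)
    (alpha : ℝ) (halpha : 1 ≤ alpha)
    (hδ : infDist x (frontier K) / alpha ≤ infDist y (frontier K)) :
    ENNReal.ofReal ((gamma / alpha) ^ d) * minCapVol K x ≤ minCapVol K y :=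
  minCapVol_ray_le_general d gamma hγ0 hγ1 K hK_compact hK_conv hK_ball hK_ball' x y hx hx0 hy t ht
    hyt alpha halpha hδ
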